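/- The pair (x̄,ū) given by x̄(t)=(cos t, sin t) and ū(t)=t is admissible (with multiplier ξ̄(t)≡1/6) and is a global optimal solution of the problem: g(x̄(0),x̄(π/2)) = 0 ≤ g(x(0),x(π/2)) for every admissible pair (x,u). -/

import Mathlib

open Real Set MeasureTheory intervalIntegral

noncomputable section

/-- `ψ(x₁,x₂) = (x₁²+x₂²−1)(x₁²+x₂²−4)`; the constraint set is `C = {ψ ≤ 0}`. -/
def ψex : ℝ × ℝ → ℝ := fun p => (p.1 ^ 2 + p.2 ^ 2 - 1) * (p.1 ^ 2 + p.2 ^ 2 - 4)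

/-- `∇ψ(x) = (4(x₁²+x₂²)−10)·(x₁,x₂)`. -/
def gradψex : ℝ × ℝ → ℝ × ℝ := fun p => (4 * (p.1 ^ 2 + p.2 ^ 2) - 10) • p

/-- The nonautonomous perturbation `f(t,(x₁,x₂),u) = (t−x₁−x₂−u, −t+x₁−x₂+u)`. -/
def fex : ℝ → ℝ × ℝ → ℝ → ℝ × ℝ := fun t p u => (t - p.1 - p.2 - u, -t + p.1 - p.2 + u)

/-- The cost `g(a,b) = ½(b₁²+b₂²−1)` if `b ∈ C`, and `+∞` otherwise. -/
def gex : ℝ × ℝ → ℝ × ℝ → EReal := fun _ b =>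
  if ψex b ≤ 0 then ((1 / 2 * (b.1 ^ 2 + b.2 ^ 2 - 1) : ℝ) : EReal) else ⊤

/-- `(x, u, ξ)` satisfies the sweeping dynamics of the example on `[0, π/2]`:
`ξ` is a bounded nonnegative measurable multiplier vanishing a.e. where `ψ(x(t)) < 0`,
and `ẋ(t) = f(t,x(t),u(t)) − ξ(t)∇ψ(x(t))` a.e. (in integral form). -/
def SweepEx (x : ℝ → ℝ × ℝ) (u ξ : ℝ → ℝ) : Prop :=
  Measurable ξ ∧
  (∃ K : ℝ, ∀ᵐ t ∂(volume.restrict (Icc (0:ℝ) (π / 2))), 0 ≤ ξ t ∧ ξ t ≤ K) ∧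
  (∀ᵐ t ∂(volume.restrict (Icc (0:ℝ) (π / 2))), ψex (x t) < 0 → ξ t = 0) ∧
  IntervalIntegrable (fun s => fex s (x s) (u s) - ξ s • gradψex (x s)) volume 0 (π / 2) ∧
  (∀ t ∈ Icc (0:ℝ) (π / 2),
    x t = x 0 + ∫ s in (0:ℝ)..t, (fex s (x s) (u s) - ξ s • gradψex (x s)))

/-- `(x,u)` is admissible for the example problem: `x` absolutely continuous solving the
sweeping inclusion for some multiplier `ξ`, `u ∈ W^{1,2}` with `u(t) ∈ U(t) = [t,π]`,
`x(0) ∈ C₀ = {(1,0)}`, `x(π/2) ∈ C₁ = {0} × [0,∞)`, and `x(t) ∈ C` for all `t`. -/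
def AdmissibleEx (x : ℝ → ℝ × ℝ) (u : ℝ → ℝ) : Prop :=
  x 0 = ((1:ℝ), (0:ℝ)) ∧
  ((x (π / 2)).1 = 0 ∧ 0 ≤ (x (π / 2)).2) ∧
  (∀ t ∈ Icc (0:ℝ) (π / 2), ψex (x t) ≤ 0) ∧
  (∀ t ∈ Icc (0:ℝ) (π / 2), u t ∈ Icc t π) ∧
  (∃ u' : ℝ → ℝ, MemLp u' 2 (volume.restrict (Icc (0:ℝ) (π / 2))) ∧
    ∀ t ∈ Icc (0:ℝ) (π / 2), u t = u 0 + ∫ s in (0:ℝ)..t, u' s) ∧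
  ∃ ξ : ℝ → ℝ, SweepEx x u ξ

/-! On the unit circle `ψ` vanishes and `∇ψ(x) = -6x`, so with `ξ ≡ 1/6` and `u(t) = t` the
dynamics `f - ξ∇ψ` reduce to the rotation `ẋ = (-x₂, x₁)`, which `(cos t, sin t)` solves.
Optimality is forced by the cost alone: every point of `C` has `|b| ≥ 1`, so `g ≥ 0`
everywhere, while `g` vanishes at `x̄(π/2) = (0, 1)`. -/

lemma ψex_circle (t : ℝ) : ψex (cos t, sin t) = 0 := by
  simp only [ψex, cos_sq_add_sin_sq, sub_self, zero_mul]

lemma fex_sub_gradψex_circle (t : ℝ) :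
    fex t (cos t, sin t) t - ((1 : ℝ) / 6) • gradψex (cos t, sin t) = (-sin t, cos t) := by
  simp only [fex, gradψex, cos_sq_add_sin_sq, Prod.smul_mk, smul_eq_mul, Prod.mk_sub_mk,
    Prod.mk.injEq]
  constructor <;> ring

lemma hasDerivAt_circle (t : ℝ) :
    HasDerivAt (fun s => (cos s, sin s)) ((-sin t, cos t) : ℝ × ℝ) t :=
  (hasDerivAt_cos t).prodMk (hasDerivAt_sin t)

lemma sweepEx_circle : SweepEx (fun t => (cos t, sin t)) (fun t => t) (fun _ => 1 / 6) := by
  have hintegrand : (fun s => fex s (cos s, sin s) s - ((1 : ℝ) / 6) • gradψex (cos s, sin s))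
      = fun s => ((-sin s, cos s) : ℝ × ℝ) :=
    funext fex_sub_gradψex_circle
  have hcont : Continuous fun s : ℝ => ((-sin s, cos s) : ℝ × ℝ) := by fun_prop
  refine ⟨measurable_const, ⟨1 / 6, .of_forall fun _ => by norm_num⟩,
    .of_forall fun t ht => absurd (ψex_circle t) ht.ne, ?_, fun t _ => ?_⟩
  · rw [hintegrand]
    exact hcont.intervalIntegrable _ _
  · rw [hintegrand, integral_eq_sub_of_hasDerivAt (fun s _ => hasDerivAt_circle s)
      (hcont.intervalIntegrable _ _)]
    abel

lemma admissibleEx_circle : AdmissibleEx (fun t => (cos t, sin t)) (fun t => t) := by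
  refine ⟨by simp, by simp, fun t _ => (ψex_circle t).le,
    fun t ht => ⟨le_rfl, ht.2.trans (by linarith [pi_pos])⟩,
    ⟨fun _ => 1, memLp_const 1, fun t _ => by simp⟩, _, sweepEx_circle⟩

lemma one_le_sq_add_sq_of_ψex_nonpos {b : ℝ × ℝ} (hb : ψex b ≤ 0) : 1 ≤ b.1 ^ 2 + b.2 ^ 2 := by
  by_contra! h
  have : 0 < (b.1 ^ 2 + b.2 ^ 2 - 1) * (b.1 ^ 2 + b.2 ^ 2 - 4) :=
    mul_pos_of_neg_of_neg (by linarith) (by linarith)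
  exact hb.not_gt this

lemma gex_nonneg (a b : ℝ × ℝ) : 0 ≤ gex a b := by
  unfold gex
  split_ifs with hb
  · have := one_le_sq_add_sq_of_ψex_nonpos hb
    exact EReal.coe_nonneg.mpr (by linarith)
  · exact le_top

/-- The pair `x̄(t) = (cos t, sin t)`, `ū(t) = t` is admissible for the
example, with constant multiplier `ξ̄ ≡ 1/6`, and it is a global optimal solution:
`g(x̄(0), x̄(π/2)) = 0 ≤ g(x(0), x(π/2))` for every admissible pair `(x,u)`. -/
theorem stmt8 :
    AdmissibleEx (fun t => (Real.cos t, Real.sin t)) (fun t => t) ∧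
    SweepEx (fun t => (Real.cos t, Real.sin t)) (fun t => t) (fun _ => 1 / 6) ∧
    gex ((fun t => (Real.cos t, Real.sin t)) 0) ((fun t => (Real.cos t, Real.sin t)) (π / 2))
      = (0 : EReal) ∧
    ∀ x u, AdmissibleEx x u → (0 : EReal) ≤ gex (x 0) (x (π / 2)) :=
  ⟨admissibleEx_circle, sweepEx_circle, by simp [gex, ψex], fun x _ _ => gex_nonneg _ _⟩

end
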